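/- arXiv:1307.2546 — 7 statements merged into one kernel-verified Lean document; each statement's English description precedes it below -/
import Mathlib

section
/- Let X : G → H be a G/K-square integrable K-periodically correlated field and let ξ be a cross-section for G/K. Then for all characters λ, μ ∈ Λ_K and all t, s ∈ G, the inner product in L²(G/K, μ; H) satisfies ⟪Z^λ(t), Z^μ(s)⟫ = ⟨λ, t−s⟩ · a_{λ−μ}(t−s), where λ−μ denotes the pointwise quotient character λ·μ̄ ∈ Λ_K. In particular this inner product depends on (t,s) only through t−s. -/
open MeasureTheory ComplexConjugate
open scoped ComplexInnerProductSpace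

/-- Let `X : G → H` be a `G/K`-square integrable `K`-periodically
correlated field and `ξ` a cross-section for `G/K`.  For characters `λ, μ ∈ Λ_K`
(given together with their factorizations `lamQ, muQ` through `G/K`) and all `t, s ∈ G`,
the inner product in `L²(G/K, μ; H)` of `Z^λ(t)` and `Z^μ(s)` (written here as the
integral of the pointwise inner products, with the paper's convention
`(u, v)_H = ⟪v, u⟫` in terms of Mathlib's inner product, which is conjugate-linear in
the first variable) equals `⟨λ, t - s⟩ · a_{λ-μ}(t-s)`, where `λ - μ` is the pointwise
quotient character `λ·μ̄` and `a_l(t) = ∫_{G/K} l(x) B_X(t;x) μ(dx)`.  In particular the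
inner product depends on `(t,s)` only through `t - s`. -/
theorem spectrum_pc_fields_stmt0
    {G : Type*} [AddCommGroup G] [TopologicalSpace G] [IsTopologicalAddGroup G]
    [LocallyCompactSpace G] [MeasurableSpace G] [BorelSpace G]
    {H : Type*} [NormedAddCommGroup H] [InnerProductSpace ℂ H] [CompleteSpace H]
    [TopologicalSpace.SeparableSpace H]
    (K : AddSubgroup G) (hK : IsClosed (K : Set G))
    [MeasurableSpace (G ⧸ K)] [BorelSpace (G ⧸ K)]
    (μ : Measure (G ⧸ K)) [μ.IsAddHaarMeasure]
    (X : G → H)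
    -- `X` is `K`-periodically correlated
    (hXcont : Continuous X)
    (hXpc : ∀ t s u : G, ∀ k ∈ K,
      (⟪X (s + (u + k)), X (t + (u + k))⟫ : ℂ) = ⟪X (s + u), X (t + u)⟫)
    -- the function `B_X`
    (B : G → (G ⧸ K) → ℂ)
    (hB : ∀ t u : G, B t (u : G ⧸ K) = ⟪X u, X (t + u)⟫)
    -- `G/K`-square integrability
    (hInt : Integrable (B 0) μ)
    -- a cross-section `ξ` for `G/K`
    (ξ : G ⧸ K → G) (hξmeas : Measurable ξ) (hξzero : ξ 0 = 0)
    (hξ : ∀ x : G ⧸ K, ((ξ x : G) : G ⧸ K) = x)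
    -- the characters `λ` and `μ` in `Λ_K` together with their factorizations through `G/K`
    (lam mu : G → ℂ)
    (hlam : Continuous lam ∧ (∀ t s : G, lam (t + s) = lam t * lam s) ∧
      (∀ t : G, ‖lam t‖ = 1) ∧ ∀ k ∈ K, lam k = 1)
    (hmu : Continuous mu ∧ (∀ t s : G, mu (t + s) = mu t * mu s) ∧
      (∀ t : G, ‖mu t‖ = 1) ∧ ∀ k ∈ K, mu k = 1)
    (lamQ muQ : G ⧸ K → ℂ)
    (hlamQ : ∀ t : G, lamQ (t : G ⧸ K) = lam t)
    (hmuQ : ∀ t : G, muQ (t : G ⧸ K) = mu t)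
    (t s : G) :
    (∫ x : G ⧸ K,
        (⟪muQ ((s : G ⧸ K) + x) • X (s + ξ x),
          lamQ ((t : G ⧸ K) + x) • X (t + ξ x)⟫ : ℂ) ∂μ)
      = lam (t - s) *
        ∫ x : G ⧸ K, (lamQ x * conj (muQ x)) * B (t - s) x ∂μ := by
  obtain ⟨-, hlam_mul, -, -⟩ := hlam
  obtain ⟨-, hmu_mul, -, -⟩ := hmu
  have key : ∀ x : G ⧸ K,
      (⟪muQ ((s : G ⧸ K) + x) • X (s + ξ x),
        lamQ ((t : G ⧸ K) + x) • X (t + ξ x)⟫ : ℂ)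
      = (fun y => conj (muQ y) * (lamQ (((t - s : G) : G ⧸ K) + y) * B (t - s) y))
          (((s : G) : G ⧸ K) + x) := by
    intro x
    have hx : ((ξ x : G) : G ⧸ K) = x := hξ x
    have hs : ((s : G ⧸ K) + x) = ((s + ξ x : G) : G ⧸ K) := by
      rw [QuotientAddGroup.mk_add, hx]
    have ht : (((t - s : G) : G ⧸ K) + (((s : G) : G ⧸ K) + x))
        = ((t : G ⧸ K) + x) := by
      rw [hs, ← QuotientAddGroup.mk_add]
      have h3 : t - s + (s + ξ x) = t + ξ x := by abel
      rw [h3, QuotientAddGroup.mk_add, hx]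
    have hBe : B (t - s) (((s : G) : G ⧸ K) + x) = ⟪X (s + ξ x), X (t + ξ x)⟫ := by
      rw [hs, hB]
      congr 2
      abel
    simp only [inner_smul_left, inner_smul_right, ht, hBe]
    ring
  rw [integral_congr_ae (Filter.Eventually.of_forall key),
    integral_add_left_eq_self
      (fun y => conj (muQ y) * (lamQ (((t - s : G) : G ⧸ K) + y) * B (t - s) y))
      (((s : G) : G ⧸ K))]
  have key2 : ∀ y : G ⧸ K,
      conj (muQ y) * (lamQ (((t - s : G) : G ⧸ K) + y) * B (t - s) y)
      = lam (t - s) * ((lamQ y * conj (muQ y)) * B (t - s) y) := by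
    intro y
    have hy : ((ξ y : G) : G ⧸ K) = y := hξ y
    have h1 : (((t - s : G) : G ⧸ K) + y) = ((t - s + ξ y : G) : G ⧸ K) := by
      rw [QuotientAddGroup.mk_add, hy]
    have h2 : lamQ y = lam (ξ y) := by
      conv_lhs => rw [← hy]
      exact hlamQ _
    rw [h1, hlamQ, hlam_mul, ← h2]
    ring
  rw [integral_congr_ae (Filter.Eventually.of_forall key2), integral_const_mul]
end

section
/- Let X : G → H be a G/K-square integrable K-periodically correlated field and ξ a cross-section for G/K. Then for every λ ∈ Λ_K and all t, s ∈ G, ‖Z^λ(t) − Z^λ(s)‖²_{L²(G/K,μ;H)} = 2·a₀(0) − ⟨λ, t−s⟩·a₀(t−s) − ⟨λ, s−t⟩·a₀(s−t). Consequently, if the function t ↦ a₀(t) is continuous at t = 0 (condition [A]), then for every λ ∈ Λ_K the map t ↦ Z^λ(t) is continuous from G to L²(G/K, μ; H). -/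
open MeasureTheory ComplexConjugate Filter
open scoped ComplexInnerProductSpace Topology

/-- Let `X : G → H` be a `G/K`-square integrable `K`-periodically
correlated field and `ξ` a cross-section for `G/K`.  For a character `λ ∈ Λ_K`
(given with its factorization `lamQ` through `G/K`) and `t, s ∈ G`, the square of the
`L²(G/K, μ; H)`-norm of `Z^λ(t) - Z^λ(s)` equals
`2·a₀(0) - ⟨λ, t-s⟩·a₀(t-s) - ⟨λ, s-t⟩·a₀(s-t)`, where `a₀(t) = ∫_{G/K} B_X(t;x) μ(dx)`.
Consequently, if `a₀` is continuous at `0` (condition [A]), the map `t ↦ Z^λ(t)` is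
continuous from `G` to `L²(G/K, μ; H)` (expressed by convergence to `0` of the squared
`L²`-distance). -/
theorem spectrum_pc_fields_stmt1
    {G : Type*} [AddCommGroup G] [TopologicalSpace G] [IsTopologicalAddGroup G]
    [LocallyCompactSpace G] [MeasurableSpace G] [BorelSpace G]
    {H : Type*} [NormedAddCommGroup H] [InnerProductSpace ℂ H] [CompleteSpace H]
    [TopologicalSpace.SeparableSpace H]
    (K : AddSubgroup G) (hK : IsClosed (K : Set G))
    [MeasurableSpace (G ⧸ K)] [BorelSpace (G ⧸ K)]
    (μ : Measure (G ⧸ K)) [μ.IsAddHaarMeasure]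
    (X : G → H)
    -- `X` is `K`-periodically correlated
    (hXcont : Continuous X)
    (hXpc : ∀ t s u : G, ∀ k ∈ K,
      (⟪X (s + (u + k)), X (t + (u + k))⟫ : ℂ) = ⟪X (s + u), X (t + u)⟫)
    -- the function `B_X`
    (B : G → (G ⧸ K) → ℂ)
    (hB : ∀ t u : G, B t (u : G ⧸ K) = ⟪X u, X (t + u)⟫)
    -- `G/K`-square integrability
    (hInt : Integrable (B 0) μ)
    -- a cross-section `ξ` for `G/K`
    (ξ : G ⧸ K → G) (hξmeas : Measurable ξ) (hξzero : ξ 0 = 0)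
    (hξ : ∀ x : G ⧸ K, ((ξ x : G) : G ⧸ K) = x)
    -- the character `λ ∈ Λ_K` together with its factorization through `G/K`
    (lam : G → ℂ)
    (hlam : Continuous lam ∧ (∀ t s : G, lam (t + s) = lam t * lam s) ∧
      (∀ t : G, ‖lam t‖ = 1) ∧ ∀ k ∈ K, lam k = 1)
    (lamQ : G ⧸ K → ℂ)
    (hlamQ : ∀ t : G, lamQ (t : G ⧸ K) = lam t) :
    (∀ t s : G,
      ((∫ x : G ⧸ K,
          ‖lamQ ((t : G ⧸ K) + x) • X (t + ξ x)
            - lamQ ((s : G ⧸ K) + x) • X (s + ξ x)‖ ^ 2 ∂μ : ℝ) : ℂ)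
        = 2 * (∫ x : G ⧸ K, B 0 x ∂μ)
          - lam (t - s) * (∫ x : G ⧸ K, B (t - s) x ∂μ)
          - lam (s - t) * (∫ x : G ⧸ K, B (s - t) x ∂μ))
    ∧ (ContinuousAt (fun t : G => ∫ x : G ⧸ K, B t x ∂μ) 0 →
        ∀ t₀ : G,
          Tendsto
            (fun t : G => ∫ x : G ⧸ K,
              ‖lamQ ((t : G ⧸ K) + x) • X (t + ξ x)
                - lamQ ((t₀ : G ⧸ K) + x) • X (t₀ + ξ x)‖ ^ 2 ∂μ)
            (𝓝 t₀) (𝓝 0)) := by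
  letI : MeasurableSpace H := borel H
  haveI : BorelSpace H := ⟨rfl⟩
  obtain ⟨hlamc, hlamm, hlamn, hlamK⟩ := hlam
  have lamne : ∀ u : G, lam u ≠ 0 := by
    intro u h
    have := hlamn u
    rw [h] at this
    simp at this
  have lam0 : lam (0 : G) = 1 := by
    have h : lam 0 * lam 0 = lam 0 * 1 := by rw [mul_one, ← hlamm, add_zero]
    exact mul_left_cancel₀ (lamne 0) h
  have hconj : ∀ u : G, conj (lam u) = lam (-u) := by
    intro u
    have h1 : conj (lam u) * lam u = 1 := by
      rw [RCLike.conj_mul, hlamn]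
      norm_num
    have h2 : lam (-u) * lam u = 1 := by
      rw [← hlamm, neg_add_cancel, lam0]
    exact mul_right_cancel₀ (lamne u) (h1.trans h2.symm)
  have hlamQn : ∀ x : G ⧸ K, conj (lamQ x) * lamQ x = 1 := by
    intro x
    obtain ⟨u, rfl⟩ := QuotientAddGroup.mk_surjective x
    rw [hlamQ, RCLike.conj_mul, hlamn]
    norm_num
  have hmk : ∀ (t : G) (x : G ⧸ K), ((t + ξ x : G) : G ⧸ K) = (t : G ⧸ K) + x := by
    intro t x
    conv_rhs => rw [← hξ x]
    rfl
  have hlamQadd : ∀ (t : G) (x : G ⧸ K), lamQ ((t : G ⧸ K) + x) = lam t * lamQ x := by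
    intro t x
    obtain ⟨u, rfl⟩ := QuotientAddGroup.mk_surjective x
    rw [← QuotientAddGroup.mk_add, hlamQ, hlamQ, hlamm]
  have hcross : ∀ (t s : G) (x : G ⧸ K),
      conj (lamQ ((t : G ⧸ K) + x)) * lamQ ((s : G ⧸ K) + x) = lam (s - t) := by
    intro t s x
    rw [hlamQadd, hlamQadd, map_mul]
    have h := hlamQn x
    calc conj (lam t) * conj (lamQ x) * (lam s * lamQ x)
        = (conj (lam t) * lam s) * (conj (lamQ x) * lamQ x) := by ring
      _ = lam (-t) * lam s := by rw [h, hconj]; ring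
      _ = lam (s - t) := by rw [← hlamm]; congr 1; abel
  have hB' : ∀ (d : G) (y : G ⧸ K), B d y = ⟪X (ξ y), X (d + ξ y)⟫ := by
    intro d y
    have := hB d (ξ y)
    rwa [hξ y] at this
  -- the key pointwise identity
  have key : ∀ t s : G, ∀ x : G ⧸ K,
      ((‖lamQ ((t : G ⧸ K) + x) • X (t + ξ x)
          - lamQ ((s : G ⧸ K) + x) • X (s + ξ x)‖ ^ 2 : ℝ) : ℂ)
        = B 0 ((t : G ⧸ K) + x) + B 0 ((s : G ⧸ K) + x)
          - lam (t - s) * B (t - s) ((s : G ⧸ K) + x)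
          - lam (s - t) * B (s - t) ((t : G ⧸ K) + x) := by
    intro t s x
    have e1 : (⟪X (t + ξ x), X (t + ξ x)⟫ : ℂ) = B 0 ((t : G ⧸ K) + x) := by
      rw [← hmk t x, hB, zero_add]
    have e4 : (⟪X (s + ξ x), X (s + ξ x)⟫ : ℂ) = B 0 ((s : G ⧸ K) + x) := by
      rw [← hmk s x, hB, zero_add]
    have e2 : (⟪X (t + ξ x), X (s + ξ x)⟫ : ℂ) = B (s - t) ((t : G ⧸ K) + x) := by
      have harg : s - t + (t + ξ x) = s + ξ x := by abel
      rw [← hmk t x, hB, harg]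
    have e3 : (⟪X (s + ξ x), X (t + ξ x)⟫ : ℂ) = B (t - s) ((s : G ⧸ K) + x) := by
      have harg : t - s + (s + ξ x) = t + ξ x := by abel
      rw [← hmk s x, hB, harg]
    have e0 : ((‖lamQ ((t : G ⧸ K) + x) • X (t + ξ x)
          - lamQ ((s : G ⧸ K) + x) • X (s + ξ x)‖ ^ 2 : ℝ) : ℂ)
        = ⟪lamQ ((t : G ⧸ K) + x) • X (t + ξ x) - lamQ ((s : G ⧸ K) + x) • X (s + ξ x),
           lamQ ((t : G ⧸ K) + x) • X (t + ξ x) - lamQ ((s : G ⧸ K) + x) • X (s + ξ x)⟫ := by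
      rw [inner_self_eq_norm_sq_to_K]
      norm_cast
    rw [e0]
    simp only [inner_sub_left, inner_sub_right, inner_smul_left, inner_smul_right]
    rw [e1, e2, e3, e4]
    have c1 := hcross t t x
    have c2 := hcross t s x
    have c3 := hcross s t x
    have c4 := hcross s s x
    rw [sub_self] at c1 c4
    rw [lam0] at c1 c4
    linear_combination (B 0 ((t : G ⧸ K) + x)) * c1 + (B 0 ((s : G ⧸ K) + x)) * c4
      - (B (t - s) ((s : G ⧸ K) + x)) * (hcross s t x)
      - (B (s - t) ((t : G ⧸ K) + x)) * (hcross t s x)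
  -- measurability of B d
  have hSM : ∀ d : G, AEStronglyMeasurable (B d) μ := by
    intro d
    have h1 : Measurable fun y : G ⧸ K => X (ξ y) := hXcont.measurable.comp hξmeas
    have h2 : Measurable fun y : G ⧸ K => X (d + ξ y) :=
      hXcont.measurable.comp (hξmeas.const_add d)
    have h3 : Measurable fun y : G ⧸ K => (⟪X (ξ y), X (d + ξ y)⟫ : ℂ) := h1.inner h2
    have hfe : B d = fun y : G ⧸ K => (⟪X (ξ y), X (d + ξ y)⟫ : ℂ) := funext (hB' d)
    rw [hfe]
    exact h3.aestronglyMeasurable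
  -- pointwise bound
  have hbound : ∀ (d : G) (y : G ⧸ K),
      ‖B d y‖ ≤ (B 0 y).re / 2 + (B 0 ((d : G ⧸ K) + y)).re / 2 := by
    intro d y
    have h1 : (B 0 y).re = ‖X (ξ y)‖ ^ 2 := by
      rw [hB' 0 y, zero_add, inner_self_eq_norm_sq_to_K]
      norm_cast
    have h2 : (B 0 ((d : G ⧸ K) + y)).re = ‖X (d + ξ y)‖ ^ 2 := by
      rw [← hmk d y, hB, zero_add, inner_self_eq_norm_sq_to_K]
      norm_cast
    rw [hB' d y, h1, h2]
    calc ‖(⟪X (ξ y), X (d + ξ y)⟫ : ℂ)‖ ≤ ‖X (ξ y)‖ * ‖X (d + ξ y)‖ := norm_inner_le_norm _ _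
      _ ≤ _ := by nlinarith [sq_nonneg (‖X (ξ y)‖ - ‖X (d + ξ y)‖)]
  -- integrability
  have hIntT : ∀ c : G ⧸ K, Integrable (fun x => B 0 (c + x)) μ := fun c =>
    hInt.comp_add_left c
  have hIntd : ∀ d : G, Integrable (B d) μ := by
    intro d
    have hg : Integrable (fun y => (B 0 y).re / 2 + (B 0 ((d : G ⧸ K) + y)).re / 2) μ :=
      (hInt.re.div_const 2).add ((hIntT (d : G ⧸ K)).re.div_const 2)
    exact hg.mono' (hSM d) (ae_of_all _ (hbound d))
  have hIntdT : ∀ (d : G) (c : G ⧸ K), Integrable (fun x => B d (c + x)) μ := fun d c =>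
    (hIntd d).comp_add_left c
  -- part 1
  have part1 : ∀ t s : G,
      ((∫ x : G ⧸ K,
          ‖lamQ ((t : G ⧸ K) + x) • X (t + ξ x)
            - lamQ ((s : G ⧸ K) + x) • X (s + ξ x)‖ ^ 2 ∂μ : ℝ) : ℂ)
        = 2 * (∫ x : G ⧸ K, B 0 x ∂μ)
          - lam (t - s) * (∫ x : G ⧸ K, B (t - s) x ∂μ)
          - lam (s - t) * (∫ x : G ⧸ K, B (s - t) x ∂μ) := by
    intro t s
    have myofReal : ∀ f : (G ⧸ K) → ℝ,
        ((∫ x, f x ∂μ : ℝ) : ℂ) = ∫ x, ((f x : ℝ) : ℂ) ∂μ := fun f => (integral_ofReal).symm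
    rw [myofReal]
    rw [integral_congr_ae (ae_of_all μ (fun x => key t s x))]
    have I1 : Integrable (fun x : G ⧸ K => B 0 ((t : G ⧸ K) + x)) μ := hIntT _
    have I2 : Integrable (fun x : G ⧸ K => B 0 ((s : G ⧸ K) + x)) μ := hIntT _
    have I3 : Integrable (fun x : G ⧸ K => lam (t - s) * B (t - s) ((s : G ⧸ K) + x)) μ :=
      (hIntdT _ _).const_mul _
    have I4 : Integrable (fun x : G ⧸ K => lam (s - t) * B (s - t) ((t : G ⧸ K) + x)) μ :=
      (hIntdT _ _).const_mul _
    have I12 : Integrable (fun x : G ⧸ K =>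
        B 0 ((t : G ⧸ K) + x) + B 0 ((s : G ⧸ K) + x)) μ := I1.add I2
    have I123 : Integrable (fun x : G ⧸ K =>
        B 0 ((t : G ⧸ K) + x) + B 0 ((s : G ⧸ K) + x)
          - lam (t - s) * B (t - s) ((s : G ⧸ K) + x)) μ := I12.sub I3
    rw [integral_sub I123 I4, integral_sub I12 I3,
      integral_add I1 I2, integral_const_mul, integral_const_mul,
      integral_add_left_eq_self (B 0) ((t : G ⧸ K)),
      integral_add_left_eq_self (B 0) ((s : G ⧸ K)),
      integral_add_left_eq_self (B (t - s)) ((s : G ⧸ K)),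
      integral_add_left_eq_self (B (s - t)) ((t : G ⧸ K))]
    ring
  refine ⟨part1, ?_⟩
  -- part 2
  intro hA t₀
  have hre : ∀ t : G,
      (∫ x : G ⧸ K,
        ‖lamQ ((t : G ⧸ K) + x) • X (t + ξ x)
          - lamQ ((t₀ : G ⧸ K) + x) • X (t₀ + ξ x)‖ ^ 2 ∂μ)
      = (2 * (∫ x : G ⧸ K, B 0 x ∂μ)
          - lam (t - t₀) * (∫ x : G ⧸ K, B (t - t₀) x ∂μ)
          - lam (t₀ - t) * (∫ x : G ⧸ K, B (t₀ - t) x ∂μ)).re := by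
    intro t
    rw [← part1 t t₀]
    exact (Complex.ofReal_re _).symm
  have h1 : Tendsto (fun t : G => t - t₀) (𝓝 t₀) (𝓝 0) := by
    have := (show Continuous fun t : G => t - t₀ from continuous_id.sub (continuous_const (y := t₀))).tendsto t₀
    simpa using this
  have h1' : Tendsto (fun t : G => t₀ - t) (𝓝 t₀) (𝓝 0) := by
    have := (show Continuous fun t : G => t₀ - t from (continuous_const (y := t₀)).sub continuous_id).tendsto t₀
    simpa using this
  have hA0 : Tendsto (fun d : G => ∫ x : G ⧸ K, B d x ∂μ) (𝓝 0)
      (𝓝 (∫ x : G ⧸ K, B 0 x ∂μ)) := hA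
  have hlt : Tendsto (fun t : G => lam (t - t₀)) (𝓝 t₀) (𝓝 1) := by
    have := (hlamc.tendsto 0).comp h1
    rwa [lam0] at this
  have hlt' : Tendsto (fun t : G => lam (t₀ - t)) (𝓝 t₀) (𝓝 1) := by
    have := (hlamc.tendsto 0).comp h1'
    rwa [lam0] at this
  have hat : Tendsto (fun t : G => ∫ x : G ⧸ K, B (t - t₀) x ∂μ) (𝓝 t₀)
      (𝓝 (∫ x : G ⧸ K, B 0 x ∂μ)) := hA0.comp h1
  have hat' : Tendsto (fun t : G => ∫ x : G ⧸ K, B (t₀ - t) x ∂μ) (𝓝 t₀)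
      (𝓝 (∫ x : G ⧸ K, B 0 x ∂μ)) := hA0.comp h1'
  have hE : Tendsto (fun t : G =>
      2 * (∫ x : G ⧸ K, B 0 x ∂μ)
        - lam (t - t₀) * (∫ x : G ⧸ K, B (t - t₀) x ∂μ)
        - lam (t₀ - t) * (∫ x : G ⧸ K, B (t₀ - t) x ∂μ)) (𝓝 t₀)
      (𝓝 (2 * (∫ x : G ⧸ K, B 0 x ∂μ)
        - 1 * (∫ x : G ⧸ K, B 0 x ∂μ) - 1 * (∫ x : G ⧸ K, B 0 x ∂μ))) :=
    (tendsto_const_nhds.sub (hlt.mul hat)).sub (hlt'.mul hat')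
  have hzero : (2 * (∫ x : G ⧸ K, B 0 x ∂μ)
      - 1 * (∫ x : G ⧸ K, B 0 x ∂μ) - 1 * (∫ x : G ⧸ K, B 0 x ∂μ) : ℂ) = 0 := by ring
  rw [hzero] at hE
  have hfin := (Complex.continuous_re.tendsto 0).comp hE
  have hfeq : (fun t : G => ∫ x : G ⧸ K,
      ‖lamQ ((t : G ⧸ K) + x) • X (t + ξ x)
        - lamQ ((t₀ : G ⧸ K) + x) • X (t₀ + ξ x)‖ ^ 2 ∂μ)
      = fun t : G => (2 * (∫ x : G ⧸ K, B 0 x ∂μ)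
          - lam (t - t₀) * (∫ x : G ⧸ K, B (t - t₀) x ∂μ)
          - lam (t₀ - t) * (∫ x : G ⧸ K, B (t₀ - t) x ∂μ)).re := funext hre
  rw [hfeq]
  simpa only [Function.comp_def, Complex.zero_re] using hfin
end

section
/- Let X : G → H be a K-periodically correlated field and suppose the quotient group G/K is compact. Then X is bounded (sup_{t∈G} ‖X(t)‖ < ∞), X is G/K-square integrable, and the function t ↦ a₀(t) = ∫_{G/K} B_X(t;x) μ(dx) is continuous on G; in particular condition [A] holds. -/
open MeasureTheory ComplexConjugate
open scoped ComplexInnerProductSpace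

/-- Let `X : G → H` be a `K`-periodically correlated field and suppose
that the quotient group `G/K` is compact.  Then `X` is bounded, `X` is `G/K`-square
integrable (i.e. `B_X(0;·)` is `μ`-integrable), and the function
`t ↦ a₀(t) = ∫_{G/K} B_X(t;x) μ(dx)` is continuous on `G`; in particular condition [A]
(continuity of `a₀` at `0`) holds. -/
theorem spectrum_pc_fields_stmt2
    {G : Type*} [AddCommGroup G] [TopologicalSpace G] [IsTopologicalAddGroup G]
    [LocallyCompactSpace G]
    {H : Type*} [NormedAddCommGroup H] [InnerProductSpace ℂ H] [CompleteSpace H]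
    [TopologicalSpace.SeparableSpace H]
    (K : AddSubgroup G) (hK : IsClosed (K : Set G))
    [MeasurableSpace (G ⧸ K)] [BorelSpace (G ⧸ K)]
    [CompactSpace (G ⧸ K)]
    (μ : Measure (G ⧸ K)) [μ.IsAddHaarMeasure]
    (X : G → H)
    -- `X` is `K`-periodically correlated
    (hXcont : Continuous X)
    (hXpc : ∀ t s u : G, ∀ k ∈ K,
      (⟪X (s + (u + k)), X (t + (u + k))⟫ : ℂ) = ⟪X (s + u), X (t + u)⟫)
    -- the function `B_X`
    (B : G → (G ⧸ K) → ℂ)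
    (hB : ∀ t u : G, B t (u : G ⧸ K) = ⟪X u, X (t + u)⟫) :
    (∃ C : ℝ, ∀ t : G, ‖X t‖ ≤ C)
    ∧ Integrable (B 0) μ
    ∧ Continuous (fun t : G => ∫ x : G ⧸ K, B t x ∂μ)
    ∧ ContinuousAt (fun t : G => ∫ x : G ⧸ K, B t x ∂μ) 0 := by
  -- norm is K-periodic
  have hnorm : ∀ u : G, ∀ k ∈ K, ‖X (u + k)‖ = ‖X u‖ := by
    intro u k hk
    have h := hXpc 0 0 u k hk
    simp only [zero_add, inner_self_eq_norm_sq_to_K] at h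
    have h1 : (‖X (u + k)‖ : ℝ) ^ 2 = ‖X u‖ ^ 2 := by exact_mod_cast h
    nlinarith [norm_nonneg (X (u + k)), norm_nonneg (X u)]
  -- lift the norm to the quotient
  set N : G ⧸ K → ℝ := Quotient.lift (fun u => ‖X u‖) (by
    intro a b hab
    have hk : -a + b ∈ K := (QuotientAddGroup.leftRel_apply).mp hab
    have : b = a + (-a + b) := by abel
    rw [this]
    exact (hnorm a _ hk).symm) with hN
  have hNmk : ∀ u : G, N (u : G ⧸ K) = ‖X u‖ := fun u => rfl
  have hNcont : Continuous N :=
    (QuotientAddGroup.isQuotientMap_mk K).continuous_iff.mpr (by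
      exact hXcont.norm)
  obtain ⟨x₀, -, hx₀⟩ := isCompact_univ.exists_isMaxOn Set.univ_nonempty
    hNcont.continuousOn
  set C : ℝ := N x₀ with hC
  have hXbd : ∀ t : G, ‖X t‖ ≤ C := fun t => by
    exact (hx₀ (Set.mem_univ ((t : G ⧸ K))) : N (t : G ⧸ K) ≤ N x₀)
  have hC0 : 0 ≤ C := le_trans (norm_nonneg (X 0)) (hXbd 0)
  -- B t is continuous on the quotient
  have hBcont : ∀ t : G, Continuous (B t) := fun t =>
    (QuotientAddGroup.isQuotientMap_mk K).continuous_iff.mpr (by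
      have : (B t) ∘ (QuotientAddGroup.mk : G → G ⧸ K)
          = fun u => (⟪X u, X (t + u)⟫ : ℂ) := funext fun u => hB t u
      rw [this]
      exact continuous_inner.comp
        (hXcont.prodMk (hXcont.comp (continuous_const.add continuous_id))))
  -- pointwise bound
  have hBbd : ∀ t : G, ∀ x : G ⧸ K, ‖B t x‖ ≤ C * C := by
    intro t x
    induction x using QuotientAddGroup.induction_on with
    | H u =>
      rw [hB t u]
      calc ‖(⟪X u, X (t + u)⟫ : ℂ)‖ ≤ ‖X u‖ * ‖X (t + u)‖ := norm_inner_le_norm _ _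
        _ ≤ C * C := mul_le_mul (hXbd u) (hXbd (t + u)) (norm_nonneg _) hC0
  haveI : IsFiniteMeasure μ := ⟨isCompact_univ.measure_lt_top⟩
  have hint : ∀ t : G, Integrable (B t) μ := fun t =>
    (integrable_const (C * C : ℝ)).mono' (hBcont t).aestronglyMeasurable
      (Filter.Eventually.of_forall (hBbd t))
  -- the uncurried `B` is continuous
  have hmkQ : Topology.IsQuotientMap (Prod.map (id : G → G) (QuotientAddGroup.mk : G → G ⧸ K)) :=
    IsOpenMap.isQuotientMap
      (IsOpenMap.prodMap IsOpenMap.id (QuotientAddGroup.isOpenMap_coe (N := K)))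
      (continuous_id.prodMap continuous_quot_mk)
      (Function.Surjective.prodMap Function.surjective_id
        (QuotientAddGroup.mk_surjective))
  have hFcont : Continuous (Function.uncurry B) := by
    rw [hmkQ.continuous_iff]
    have : (Function.uncurry B) ∘ (Prod.map id (QuotientAddGroup.mk : G → G ⧸ K))
        = fun p : G × G => (⟪X p.2, X (p.1 + p.2)⟫ : ℂ) := by
      funext p; exact hB p.1 p.2
    rw [this]
    exact continuous_inner.comp
      ((hXcont.comp continuous_snd).prodMk
        (hXcont.comp (continuous_fst.add continuous_snd)))
  -- curry into `C(G ⧸ K, ℂ)`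
  set Fc : C(G × (G ⧸ K), ℂ) := ⟨Function.uncurry B, hFcont⟩ with hFc
  -- the integration functional is Lipschitz
  have hΦ : LipschitzWith (μ Set.univ).toNNReal
      (fun f : C(G ⧸ K, ℂ) => ∫ x, f x ∂μ) := by
    apply LipschitzWith.of_dist_le_mul
    intro f g
    have hif : ∀ h : C(G ⧸ K, ℂ), Integrable (⇑h) μ := fun h =>
      (integrable_const (‖h‖ : ℝ)).mono' h.continuous.aestronglyMeasurable
        (Filter.Eventually.of_forall fun x => h.norm_coe_le_norm x)
    calc dist (∫ x, f x ∂μ) (∫ x, g x ∂μ)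
        = ‖∫ x, (f x - g x) ∂μ‖ := by
          rw [dist_eq_norm, ← integral_sub (hif f) (hif g)]
      _ ≤ dist f g * (μ Set.univ).toReal :=
          norm_integral_le_of_norm_le_const
            (Filter.Eventually.of_forall fun x => by
              rw [← dist_eq_norm]; exact ContinuousMap.dist_apply_le_dist x)
      _ = ((μ Set.univ).toNNReal : ℝ) * dist f g := by
          rw [mul_comm]; rfl
  have key : Continuous (fun t : G => ∫ x : G ⧸ K, B t x ∂μ) := by
    have : (fun t : G => ∫ x : G ⧸ K, B t x ∂μ)
        = (fun f : C(G ⧸ K, ℂ) => ∫ x, f x ∂μ) ∘ (fun t => Fc.curry t) := rfl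
    rw [this]
    exact hΦ.continuous.comp (ContinuousMap.continuous Fc.curry)
  exact ⟨⟨C, hXbd⟩, hint 0, key, key.continuousAt⟩
end

section
/- Let X : G → H be a G/K-square integrable K-periodically correlated field. Suppose X is bounded (sup_{t∈G} ‖X(t)‖ < ∞) and the function x ↦ B_X(0;x)^{1/2} is μ-integrable on G/K. Then the function t ↦ a₀(t) = ∫_{G/K} B_X(t;x) μ(dx) is continuous on G; in particular condition [A] holds. -/
open MeasureTheory ComplexConjugate
open scoped ComplexInnerProductSpace

set_option maxHeartbeats 2000000 in
/-- Let `X : G → H` be a `G/K`-square integrable `K`-periodically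
correlated field.  If `X` is bounded and `x ↦ B_X(0;x)^{1/2}` is `μ`-integrable on
`G/K` (note that `B_X(0;x) = ‖X(u)‖² ≥ 0` whenever `x = ι(u)`, so the square root is
taken of its real part), then `t ↦ a₀(t) = ∫_{G/K} B_X(t;x) μ(dx)` is continuous on
`G`; in particular condition [A] (continuity of `a₀` at `0`) holds. -/
theorem spectrum_pc_fields_stmt3
    {G : Type*} [AddCommGroup G] [TopologicalSpace G] [IsTopologicalAddGroup G]
    [LocallyCompactSpace G]
    {H : Type*} [NormedAddCommGroup H] [InnerProductSpace ℂ H] [CompleteSpace H]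
    [TopologicalSpace.SeparableSpace H]
    (K : AddSubgroup G) (hK : IsClosed (K : Set G))
    [MeasurableSpace (G ⧸ K)] [BorelSpace (G ⧸ K)]
    (μ : Measure (G ⧸ K)) [μ.IsAddHaarMeasure]
    (X : G → H)
    -- `X` is `K`-periodically correlated
    (hXcont : Continuous X)
    (hXpc : ∀ t s u : G, ∀ k ∈ K,
      (⟪X (s + (u + k)), X (t + (u + k))⟫ : ℂ) = ⟪X (s + u), X (t + u)⟫)
    -- the function `B_X`
    (B : G → (G ⧸ K) → ℂ)
    (hB : ∀ t u : G, B t (u : G ⧸ K) = ⟪X u, X (t + u)⟫)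
    -- `G/K`-square integrability
    (hInt : Integrable (B 0) μ)
    -- `X` is bounded
    (hbdd : ∃ C : ℝ, ∀ t : G, ‖X t‖ ≤ C)
    -- `B_X(0;·)^{1/2}` is `μ`-integrable
    (hsqrt : Integrable (fun x : G ⧸ K => Real.sqrt (B 0 x).re) μ) :
    Continuous (fun t : G => ∫ x : G ⧸ K, B t x ∂μ)
    ∧ ContinuousAt (fun t : G => ∫ x : G ⧸ K, B t x ∂μ) 0 := by
  haveI := hK
  obtain ⟨C, hC⟩ := hbdd
  set C' : ℝ := max C 0 with hC'def
  have hC0 : ∀ t, ‖X t‖ ≤ C' := fun t => (hC t).trans (le_max_left _ _)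
  have hC'0 : 0 ≤ C' := le_max_right _ _
  -- continuity of `B t`
  have hQ : Topology.IsQuotientMap (QuotientAddGroup.mk : G → G ⧸ K) :=
    QuotientAddGroup.isQuotientMap_mk K
  have hBcont : ∀ t, Continuous (B t) := by
    intro t
    rw [hQ.continuous_iff]
    have h1 : (B t ∘ QuotientAddGroup.mk) = fun u : G => (⟪X u, X (t + u)⟫ : ℂ) := by
      funext u; simp only [Function.comp]; exact hB t u
    rw [h1]
    exact Continuous.inner hXcont (hXcont.comp (continuous_const.add continuous_id))
  -- the function ψ = √(B 0 ·).re
  set ψ : G ⧸ K → ℝ := fun x => Real.sqrt (B 0 x).re with hψdef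
  have hψcont : Continuous ψ :=
    Real.continuous_sqrt.comp (Complex.continuous_re.comp (hBcont 0))
  have hψ0 : ∀ x, 0 ≤ ψ x := fun x => Real.sqrt_nonneg _
  have hBre : ∀ u : G, (B 0 (u : G ⧸ K)).re = ‖X u‖ ^ 2 := by
    intro u
    rw [hB 0 u, zero_add]
    simpa using inner_self_eq_norm_sq (𝕜 := ℂ) (X u)
  have hψval : ∀ u : G, ψ (u : G ⧸ K) = ‖X u‖ := by
    intro u
    simp only [hψdef, hBre u, Real.sqrt_sq (norm_nonneg _)]
  have hψle : ∀ x, ψ x ≤ C' := by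
    intro x
    refine QuotientAddGroup.induction_on x fun u => ?_
    rw [hψval u]; exact hC0 u
  -- integrability of each `B t`
  have hint : ∀ t, Integrable (B t) μ := by
    intro t
    refine Integrable.mono (hsqrt.const_mul C') (hBcont t).aestronglyMeasurable
      (ae_of_all _ fun x => ?_)
    refine QuotientAddGroup.induction_on x fun u => ?_
    rw [hB t u]
    calc ‖(⟪X u, X (t + u)⟫ : ℂ)‖ ≤ ‖X u‖ * ‖X (t + u)‖ := norm_inner_le_norm _ _
      _ ≤ ‖X u‖ * C' := mul_le_mul_of_nonneg_left (hC0 _) (norm_nonneg _)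
      _ = C' * ψ ((u : G ⧸ K)) := by rw [hψval u, mul_comm]
      _ ≤ ‖C' * ψ ((u : G ⧸ K))‖ := le_abs_self _
  -- the regular Haar reference measure
  set ν : Measure (G ⧸ K) := MeasureTheory.Measure.addHaar with hνdef
  set c : NNReal := MeasureTheory.Measure.addHaarScalarFactor μ ν with hcdef
  have hc0 : (0 : NNReal) < c := Measure.addHaarScalarFactor_pos_of_isAddHaarMeasure μ ν
  have hkey : ∀ f : (G ⧸ K) → ℝ, Continuous f → (∀ x, 0 ≤ f x) →
      ∫⁻ x, ENNReal.ofReal (f x) ∂μ = (c : ENNReal) * ∫⁻ x, ENNReal.ofReal (f x) ∂ν := by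
    intro f hf hf0
    rw [lintegral_eq_lintegral_meas_lt μ (ae_of_all _ hf0) hf.measurable.aemeasurable,
      lintegral_eq_lintegral_meas_lt ν (ae_of_all _ hf0) hf.measurable.aemeasurable,
      ← lintegral_const_mul' (c : ENNReal) _ ENNReal.coe_ne_top]
    refine setLIntegral_congr_fun measurableSet_Ioi (fun t _ => ?_)
    rw [Measure.measure_isAddHaarMeasure_eq_smul_of_isOpen μ ν
      (isOpen_lt continuous_const hf)]
    simp [ENNReal.smul_def, hcdef]
  have hkey' : ∀ f : (G ⧸ K) → ℝ, Continuous f → (∀ x, 0 ≤ f x) →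
      ∫ x, f x ∂μ = (c : ℝ) * ∫ x, f x ∂ν := by
    intro f hf hf0
    rw [integral_eq_lintegral_of_nonneg_ae (ae_of_all _ hf0) hf.aestronglyMeasurable,
      integral_eq_lintegral_of_nonneg_ae (ae_of_all _ hf0) hf.aestronglyMeasurable,
      hkey f hf hf0, ENNReal.toReal_mul, ENNReal.coe_toReal]
  -- ψ is integrable with respect to ν
  have hψν : Integrable ψ ν := by
    refine ⟨hψcont.aestronglyMeasurable, ?_⟩
    rw [hasFiniteIntegral_iff_ofReal (ae_of_all _ hψ0)]
    have h := hkey ψ hψcont hψ0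
    have hμfin : ∫⁻ x, ENNReal.ofReal (ψ x) ∂μ < ⊤ := hsqrt.lintegral_lt_top
    by_contra htop
    rw [not_lt, top_le_iff] at htop
    rw [htop, ENNReal.mul_top (by exact_mod_cast hc0.ne')] at h
    rw [h] at hμfin
    exact absurd hμfin (lt_irrefl _)
  -- main continuity statement
  suffices hcont : Continuous (fun t : G => ∫ x : G ⧸ K, B t x ∂μ) from
    ⟨hcont, hcont.continuousAt⟩
  rw [continuous_iff_continuousAt]
  intro t₀
  rw [ContinuousAt, Metric.tendsto_nhds]
  intro ε hε
  -- tail estimate: a compact set `E` outside of which ψ has small μ-integral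
  set d : ℝ := ε / (8 * (C' + 1)) with hddef
  have hd0 : 0 < d := by positivity
  obtain ⟨E, hEcomp, hEmeas, hμE, htail⟩ :
      ∃ E : Set (G ⧸ K), IsCompact E ∧ MeasurableSet E ∧ μ E < ⊤ ∧
        ∫ x in Eᶜ, ψ x ∂μ ≤ d := by
    set δ₀ : ℝ := d / (2 * ((c : ℝ) + 1) * (C' + 1)) with hδ₀def
    have hδ₀ : 0 < δ₀ := by positivity
    -- a monotone family of open sets exhausting `{ψ > 0}`
    set U : ℕ → Set (G ⧸ K) := fun n => {x | 1 / ((n : ℝ) + 1) < ψ x} with hUdef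
    have hUopen : ∀ n, IsOpen (U n) := fun n => isOpen_lt continuous_const hψcont
    have hUmono : Monotone U := by
      intro m n hmn x hx
      have h1 : (1 : ℝ) / ((n : ℝ) + 1) ≤ 1 / ((m : ℝ) + 1) := by
        apply one_div_le_one_div_of_le (by positivity)
        exact_mod_cast Nat.add_le_add_right hmn 1
      exact lt_of_le_of_lt h1 hx
    set S : Set (G ⧸ K) := ⋃ n, U n with hSdef
    have hSmeas : MeasurableSet S := MeasurableSet.iUnion fun n => (hUopen n).measurableSet
    have hcompl0 : ∀ x ∈ Sᶜ, ψ x = 0 := by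
      intro x hx
      by_contra hne
      have hpos : 0 < ψ x := lt_of_le_of_ne (hψ0 x) (Ne.symm hne)
      obtain ⟨n, hn⟩ := exists_nat_one_div_lt hpos
      exact hx (Set.mem_iUnion.mpr ⟨n, hn⟩)
    have htotal : ∫ x, ψ x ∂ν = ∫ x in S, ψ x ∂ν := by
      have hsplit := integral_add_compl hSmeas hψν
      have hz : ∫ x in Sᶜ, ψ x ∂ν = 0 := by
        rw [setIntegral_congr_fun hSmeas.compl (g := fun _ => (0 : ℝ))
          fun x hx => hcompl0 x hx]
        exact integral_zero _ _
      linarith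
    have htendsto := tendsto_setIntegral_of_monotone
      (fun n => (hUopen n).measurableSet) hUmono (hψν.integrableOn (s := S))
    obtain ⟨N, hN⟩ := (Metric.tendsto_atTop.mp htendsto) δ₀ hδ₀
    have hNle : ∫ x in U N, ψ x ∂ν ≤ ∫ x in S, ψ x ∂ν := by
      refine setIntegral_mono_set hψν.integrableOn
        (ae_restrict_of_ae (ae_of_all _ hψ0)) ?_
      exact HasSubset.Subset.eventuallyLE (Set.subset_iUnion U N)
    have hN' : ∫ x in S, ψ x ∂ν - ∫ x in U N, ψ x ∂ν < δ₀ := by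
      have := hN N le_rfl
      rw [Real.dist_eq, abs_sub_comm, abs_of_nonneg (by linarith)] at this
      linarith
    -- `ν (U N)` is finite by the Markov inequality
    have hνUN : ν (U N) < ⊤ := by
      by_contra htop
      rw [not_lt, top_le_iff] at htop
      have hsubset : U N ⊆ {x | ENNReal.ofReal (1 / ((N : ℝ) + 1)) ≤ ENNReal.ofReal (ψ x)} :=
        fun x hx => ENNReal.ofReal_le_ofReal (le_of_lt hx)
      have hmtop : ν {x | ENNReal.ofReal (1 / ((N : ℝ) + 1)) ≤ ENNReal.ofReal (ψ x)} = ⊤ :=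
        measure_mono_top hsubset htop
      have hmar := mul_meas_ge_le_lintegral₀
        (μ := ν) (f := fun x => ENNReal.ofReal (ψ x))
        (ENNReal.measurable_ofReal.comp hψcont.measurable).aemeasurable
        (ENNReal.ofReal (1 / ((N : ℝ) + 1)))
      rw [hmtop, ENNReal.mul_top (ENNReal.ofReal_pos.mpr (by positivity)).ne'] at hmar
      exact absurd (top_le_iff.mp hmar) hψν.lintegral_lt_top.ne
    -- a compact set capturing most of `U N` for `ν`
    obtain ⟨E₀, hE₀U, hE₀comp, hE₀diff⟩ :=
      (hUopen N).measurableSet.exists_isCompact_diff_lt hνUN.ne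
        (ε := ENNReal.ofReal δ₀) (ENNReal.ofReal_pos.mpr hδ₀).ne'
    have hE₀meas : MeasurableSet E₀ := hE₀comp.isClosed.measurableSet
    -- a continuous bump `φ` equal to 1 on `E₀`, with compact support
    obtain ⟨φ, hφ1, _hφ0, hφsupp, hφmem⟩ :=
      exists_continuous_one_zero_of_isCompact hE₀comp isClosed_empty (Set.disjoint_empty _)
    set g : (G ⧸ K) → ℝ := fun x => ψ x * φ x with hgdef
    have hgcont : Continuous g := hψcont.mul φ.continuous
    have hgsupp : HasCompactSupport g := hφsupp.mul_left (f := ψ)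
    have hgμ : Integrable g μ := hgcont.integrable_of_hasCompactSupport hgsupp
    have hgν : Integrable g ν := hgcont.integrable_of_hasCompactSupport hgsupp
    have hsubnn : ∀ x, 0 ≤ ψ x - g x := by
      intro x
      have h1 := (hφmem x).1
      have h2 := (hφmem x).2
      have h3 := hψ0 x
      simp only [hgdef]
      nlinarith
    have hsuble : ∀ x, ψ x - g x ≤ ψ x := by
      intro x
      have h1 := (hφmem x).1
      have h3 := hψ0 x
      simp only [hgdef]
      nlinarith
    -- the ν-integral of ψ - g is small
    have hIq : ∫ x, (ψ x - g x) ∂ν ≤ δ₀ + C' * δ₀ := by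
      have hsplit := integral_add_compl hE₀meas (hψν.sub hgν)
      simp only [Pi.sub_apply] at hsplit
      have hzero : ∫ x in E₀, (ψ x - g x) ∂ν = 0 := by
        rw [setIntegral_congr_fun hE₀meas (g := fun _ => (0 : ℝ)) fun x hx => by
          have hφx : φ x = 1 := hφ1 hx
          simp [hgdef, hφx]]
        exact integral_zero _ _
      have hdecomp : E₀ᶜ = (U N)ᶜ ∪ (U N \ E₀) := by
        ext x
        by_cases hx : x ∈ U N
        · simp [hx]
        · have hxE : x ∉ E₀ := fun h => hx (hE₀U h)
          simp [hx, hxE]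
      have hUc : ∫ x in (U N)ᶜ, ψ x ∂ν < δ₀ := by
        have h4 := integral_add_compl (hUopen N).measurableSet hψν
        linarith
      have hUdiff : ∫ x in U N \ E₀, ψ x ∂ν ≤ C' * δ₀ := by
        have hνlt : ν (U N \ E₀) < ENNReal.ofReal δ₀ := hE₀diff
        have hfin : ν (U N \ E₀) < ⊤ := lt_of_lt_of_le hνlt le_top
        calc ∫ x in U N \ E₀, ψ x ∂ν ≤ ∫ _x in U N \ E₀, C' ∂ν :=
            setIntegral_mono_on hψν.integrableOn
              (integrableOn_const hfin.ne)
              ((hUopen N).measurableSet.diff hE₀meas) fun x _ => hψle x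
          _ = (ν (U N \ E₀)).toReal * C' := by rw [setIntegral_const, smul_eq_mul, measureReal_def]
          _ ≤ δ₀ * C' :=
            mul_le_mul_of_nonneg_right
              (ENNReal.toReal_le_of_le_ofReal hδ₀.le hνlt.le) hC'0
          _ = C' * δ₀ := mul_comm _ _
      have hmono' : ∫ x in E₀ᶜ, (ψ x - g x) ∂ν ≤ ∫ x in E₀ᶜ, ψ x ∂ν := by
        have := setIntegral_mono (μ := ν) (s := E₀ᶜ)
          (hψν.sub hgν).integrableOn hψν.integrableOn hsuble
        simpa [Pi.sub_apply] using this
      have hunion : ∫ x in E₀ᶜ, ψ x ∂ν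
          = ∫ x in (U N)ᶜ, ψ x ∂ν + ∫ x in U N \ E₀, ψ x ∂ν := by
        rw [hdecomp]
        exact setIntegral_union (disjoint_compl_left.mono_right Set.diff_subset)
          ((hUopen N).measurableSet.diff hE₀meas) hψν.integrableOn hψν.integrableOn
      linarith
    -- assemble
    refine ⟨tsupport φ, hφsupp, (isClosed_tsupport _).measurableSet,
      IsCompact.measure_lt_top hφsupp, ?_⟩
    have hccoe : (0 : ℝ) ≤ (c : ℝ) := c.coe_nonneg
    calc ∫ x in (tsupport ⇑φ)ᶜ, ψ x ∂μ
        = ∫ x in (tsupport ⇑φ)ᶜ, (ψ x - g x) ∂μ := by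
          refine setIntegral_congr_fun (isClosed_tsupport _).measurableSet.compl
            fun x hx => ?_
          have hφx : φ x = 0 := image_eq_zero_of_notMem_tsupport hx
          simp [hgdef, hφx]
      _ ≤ ∫ x, (ψ x - g x) ∂μ :=
          setIntegral_le_integral (hsqrt.sub hgμ) (ae_of_all _ hsubnn)
      _ = (c : ℝ) * ∫ x, (ψ x - g x) ∂ν := hkey' _ (hψcont.sub hgcont) hsubnn
      _ ≤ (c : ℝ) * (δ₀ + C' * δ₀) := mul_le_mul_of_nonneg_left hIq hccoe
      _ ≤ d := by
          have hq : (c : ℝ) * (1 + C') / (2 * ((c : ℝ) + 1) * (C' + 1)) ≤ 1 := by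
            rw [div_le_one (by positivity)]
            nlinarith
          have heq : (c : ℝ) * (δ₀ + C' * δ₀)
              = d * ((c : ℝ) * (1 + C') / (2 * ((c : ℝ) + 1) * (C' + 1))) := by
            rw [hδ₀def]; field_simp
          rw [heq]
          calc d * ((c : ℝ) * (1 + C') / (2 * ((c : ℝ) + 1) * (C' + 1)))
              ≤ d * 1 := mul_le_mul_of_nonneg_left hq hd0.le
            _ = d := mul_one d
  -- the function measuring `‖X (t+u) - X (t₀+u)‖` on the quotient
  set D : G × (G ⧸ K) → ℝ := fun p =>
    Real.sqrt ((B 0 (((p.1 : G ⧸ K)) + p.2)).re + (B 0 (((t₀ : G ⧸ K)) + p.2)).re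
      - 2 * (B (t₀ - p.1) (((p.1 : G ⧸ K)) + p.2)).re) with hDdef
  have hDval : ∀ (t u : G), D (t, (u : G ⧸ K)) = ‖X (t + u) - X (t₀ + u)‖ := by
    intro t u
    have e1 : ((t : G ⧸ K)) + (u : G ⧸ K) = ((t + u : G) : G ⧸ K) :=
      (QuotientAddGroup.mk_add K t u).symm
    have e2 : ((t₀ : G ⧸ K)) + (u : G ⧸ K) = ((t₀ + u : G) : G ⧸ K) :=
      (QuotientAddGroup.mk_add K t₀ u).symm
    have e3 : t₀ - t + (t + u) = t₀ + u := by abel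
    have h3 : (B (t₀ - t) ((t + u : G) : G ⧸ K)).re
        = (⟪X (t + u), X (t₀ + u)⟫ : ℂ).re := by
      rw [hB (t₀ - t) (t + u), e3]
    have hsq : ‖X (t + u) - X (t₀ + u)‖ ^ 2
        = ‖X (t + u)‖ ^ 2 - 2 * (⟪X (t + u), X (t₀ + u)⟫ : ℂ).re + ‖X (t₀ + u)‖ ^ 2 := by
      simpa using norm_sub_sq (𝕜 := ℂ) (X (t + u)) (X (t₀ + u))
    show Real.sqrt ((B 0 (((t : G ⧸ K)) + (u : G ⧸ K))).re
        + (B 0 (((t₀ : G ⧸ K)) + (u : G ⧸ K))).re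
        - 2 * (B (t₀ - t) (((t : G ⧸ K)) + (u : G ⧸ K))).re) = ‖X (t + u) - X (t₀ + u)‖
    rw [e1, e2, hBre (t + u), hBre (t₀ + u), h3]
    rw [show ‖X (t + u)‖ ^ 2 + ‖X (t₀ + u)‖ ^ 2
        - 2 * (⟪X (t + u), X (t₀ + u)⟫ : ℂ).re = ‖X (t + u) - X (t₀ + u)‖ ^ 2 by
      linarith [hsq]]
    exact Real.sqrt_sq (norm_nonneg _)
  have hDcont : Continuous D := by
    have hmkc : Continuous (QuotientAddGroup.mk : G → G ⧸ K) := hQ.continuous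
    have hadd1 : Continuous (fun p : G × (G ⧸ K) => ((p.1 : G ⧸ K) + p.2)) :=
      (hmkc.comp continuous_fst).add continuous_snd
    have h1 : Continuous (fun p : G × (G ⧸ K) => (B 0 ((p.1 : G ⧸ K) + p.2)).re) :=
      Complex.continuous_re.comp ((hBcont 0).comp hadd1)
    have h2 : Continuous (fun p : G × (G ⧸ K) => (B 0 ((t₀ : G ⧸ K) + p.2)).re) :=
      Complex.continuous_re.comp ((hBcont 0).comp (by fun_prop :
        Continuous fun p : G × (G ⧸ K) => (t₀ : G ⧸ K) + p.2))
    have h3 : Continuous (fun p : G × (G ⧸ K) => B (t₀ - p.1) ((p.1 : G ⧸ K) + p.2)) := by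
      rw [← (IsOpenQuotientMap.id.prodMap
        (QuotientAddGroup.isOpenQuotientMap_mk (N := K))).continuous_comp_iff]
      have heq : (fun p : G × (G ⧸ K) => B (t₀ - p.1) ((p.1 : G ⧸ K) + p.2))
          ∘ (Prod.map id (QuotientAddGroup.mk))
          = fun q : G × G => (⟪X (q.1 + q.2), X (t₀ + q.2)⟫ : ℂ) := by
        funext q
        show B (t₀ - q.1) ((q.1 : G ⧸ K) + (q.2 : G ⧸ K)) = _
        rw [← QuotientAddGroup.mk_add, hB]
        have e4 : t₀ - q.1 + (q.1 + q.2) = t₀ + q.2 := by abel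
        rw [e4]
      rw [heq]
      exact Continuous.inner (hXcont.comp (continuous_fst.add continuous_snd))
        (hXcont.comp (continuous_const.add continuous_snd))
    exact Real.continuous_sqrt.comp
      ((h1.add h2).sub (continuous_const.mul (Complex.continuous_re.comp h3)))
  have hDnn : ∀ p, 0 ≤ D p := fun p => Real.sqrt_nonneg _
  -- tube lemma
  set ε₂ : ℝ := ε / (8 * (C' + 1) * ((μ E).toReal + 1)) with hε₂def
  have hε₂0 : 0 < ε₂ := by positivity
  have hsub : ({t₀} : Set G) ×ˢ E ⊆ {p : G × (G ⧸ K) | D p < ε₂} := by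
    rintro ⟨t', x⟩ ⟨ht', hx⟩
    simp only [Set.mem_singleton_iff] at ht'
    show D (t', x) < ε₂
    rw [ht']
    refine QuotientAddGroup.induction_on x fun u => ?_
    rw [hDval t₀ u, sub_self, norm_zero]
    exact hε₂0
  obtain ⟨V₁, V₂, hV₁o, _hV₂o, hV₁, hV₂, hVsub⟩ :=
    generalized_tube_lemma isCompact_singleton hEcomp (isOpen_lt hDcont continuous_const) hsub
  filter_upwards [hV₁o.mem_nhds (hV₁ rfl)] with t htV
  have hptE : ∀ x ∈ E, ‖B t x - B t₀ x‖ ≤ C' * ε₂ := by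
    intro x hx
    obtain ⟨u, rfl⟩ := QuotientAddGroup.mk_surjective x
    have hDlt : D (t, (u : G ⧸ K)) < ε₂ := hVsub (Set.mk_mem_prod htV (hV₂ hx))
    rw [hDval t u] at hDlt
    rw [hB t u, hB t₀ u, ← inner_sub_right]
    calc ‖(⟪X u, X (t + u) - X (t₀ + u)⟫ : ℂ)‖
        ≤ ‖X u‖ * ‖X (t + u) - X (t₀ + u)‖ := norm_inner_le_norm _ _
      _ ≤ C' * ε₂ := mul_le_mul (hC0 u) hDlt.le (norm_nonneg _) hC'0
  have hptC : ∀ x, ‖B t x - B t₀ x‖ ≤ 2 * C' * ψ x := by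
    intro x
    refine QuotientAddGroup.induction_on x fun u => ?_
    rw [hB t u, hB t₀ u, ← inner_sub_right]
    calc ‖(⟪X u, X (t + u) - X (t₀ + u)⟫ : ℂ)‖
        ≤ ‖X u‖ * ‖X (t + u) - X (t₀ + u)‖ := norm_inner_le_norm _ _
      _ ≤ ‖X u‖ * (2 * C') := by
          refine mul_le_mul_of_nonneg_left ?_ (norm_nonneg _)
          have := norm_sub_le (X (t + u)) (X (t₀ + u))
          have h1 := hC0 (t + u)
          have h2 := hC0 (t₀ + u)
          linarith
      _ = 2 * C' * ψ ((u : G ⧸ K)) := by rw [hψval u]; ring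
  have hdint : Integrable (fun x => B t x - B t₀ x) μ := (hint t).sub (hint t₀)
  have hsplit := integral_add_compl hEmeas hdint.norm
  have hT0 : 0 ≤ ∫ x in Eᶜ, ψ x ∂μ := setIntegral_nonneg hEmeas.compl fun x _ => hψ0 x
  have hm0 : (0:ℝ) ≤ (μ E).toReal := ENNReal.toReal_nonneg
  calc dist (∫ x, B t x ∂μ) (∫ x, B t₀ x ∂μ)
      = ‖∫ x, (B t x - B t₀ x) ∂μ‖ := by
        rw [dist_eq_norm, integral_sub (hint t) (hint t₀)]
    _ ≤ ∫ x, ‖B t x - B t₀ x‖ ∂μ := norm_integral_le_integral_norm _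
    _ = (∫ x in E, ‖B t x - B t₀ x‖ ∂μ) + ∫ x in Eᶜ, ‖B t x - B t₀ x‖ ∂μ := hsplit.symm
    _ ≤ (∫ x in E, C' * ε₂ ∂μ) + ∫ x in Eᶜ, 2 * C' * ψ x ∂μ := by
        refine add_le_add ?_ ?_
        · exact setIntegral_mono_on hdint.norm.integrableOn
            (integrableOn_const hμE.ne) hEmeas hptE
        · exact setIntegral_mono_on hdint.norm.integrableOn
            ((hsqrt.const_mul (2 * C')).integrableOn) hEmeas.compl fun x _ => hptC x
    _ = C' * ε₂ * (μ E).toReal + 2 * C' * ∫ x in Eᶜ, ψ x ∂μ := by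
        rw [setIntegral_const, integral_const_mul, smul_eq_mul, measureReal_def]
        ring
    _ < ε := by
        have key1 : C' * ε₂ * (μ E).toReal ≤ ε / 8 := by
          have hq : C' * (μ E).toReal / (8 * (C' + 1) * ((μ E).toReal + 1)) ≤ 1 / 8 := by
            rw [div_le_div_iff₀ (by positivity) (by norm_num)]
            nlinarith
          have : C' * ε₂ * (μ E).toReal
              = ε * (C' * (μ E).toReal / (8 * (C' + 1) * ((μ E).toReal + 1))) := by
            rw [hε₂def]; field_simp
          rw [this]
          calc ε * (C' * (μ E).toReal / (8 * (C' + 1) * ((μ E).toReal + 1)))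
              ≤ ε * (1 / 8) := mul_le_mul_of_nonneg_left hq hε.le
            _ = ε / 8 := by ring
        have key2 : 2 * C' * ∫ x in Eᶜ, ψ x ∂μ ≤ ε / 4 := by
          have h2 : 2 * C' * ∫ x in Eᶜ, ψ x ∂μ ≤ 2 * C' * d :=
            mul_le_mul_of_nonneg_left htail (by linarith)
          have hq : C' / (4 * (C' + 1)) ≤ 1 / 4 := by
            rw [div_le_div_iff₀ (by positivity) (by norm_num)]
            nlinarith
          have heq : 2 * C' * d = ε * (C' / (4 * (C' + 1))) := by
            rw [hddef]; field_simp; ring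
          have h3 : 2 * C' * d ≤ ε / 4 := by
            rw [heq]
            calc ε * (C' / (4 * (C' + 1))) ≤ ε * (1 / 4) :=
                mul_le_mul_of_nonneg_left hq hε.le
              _ = ε / 4 := by ring
          linarith
        linarith
end

section
/- Let X : G → H be a G/K-square integrable K-periodically correlated field, and for λ, μ ∈ Λ_K and t ∈ G define R^{λ,μ}(t) = ⟨λ, t⟩ · a_{λ−μ}(t). Then the matrix function [R^{λ,μ}] is non-negative definite: for every n ∈ ℕ, all λ₁, …, λ_n ∈ Λ_K, all t₁, …, t_n ∈ G, and all complex numbers c₁, …, c_n, the sum ∑_{j=1}^n ∑_{k=1}^n c_j · conj(c_k) · R^{λ_j, λ_k}(t_j − t_k) is a non-negative real number. -/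
open MeasureTheory ComplexConjugate
open scoped ComplexInnerProductSpace

/-- Let `X : G → H` be a `G/K`-square integrable `K`-periodically
correlated field.  For characters `λ, μ ∈ Λ_K` (with factorizations `lamQ, muQ` through
`G/K`) and `t ∈ G` set `R^{λ,μ}(t) = ⟨λ, t⟩ · a_{λ-μ}(t)`, where
`a_l(t) = ∫_{G/K} l(x) B_X(t;x) μ(dx)` and `λ - μ` is the pointwise quotient character
`λ·μ̄`.  Then `[R^{λ,μ}]` is non-negative definite: for any `n`, characters
`λ₁, …, λₙ ∈ Λ_K`, points `t₁, …, tₙ ∈ G` and scalars `c₁, …, cₙ ∈ ℂ`, the double sum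
`∑_j ∑_k c_j conj(c_k) R^{λ_j, λ_k}(t_j - t_k)` is a non-negative real number. -/
theorem spectrum_pc_fields_stmt6
    {G : Type*} [AddCommGroup G] [TopologicalSpace G] [IsTopologicalAddGroup G]
    [LocallyCompactSpace G]
    {H : Type*} [NormedAddCommGroup H] [InnerProductSpace ℂ H] [CompleteSpace H]
    [TopologicalSpace.SeparableSpace H]
    (K : AddSubgroup G) (hK : IsClosed (K : Set G))
    [MeasurableSpace (G ⧸ K)] [BorelSpace (G ⧸ K)]
    (μ : Measure (G ⧸ K)) [μ.IsAddHaarMeasure]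
    (X : G → H)
    -- `X` is `K`-periodically correlated
    (hXcont : Continuous X)
    (hXpc : ∀ t s u : G, ∀ k ∈ K,
      (⟪X (s + (u + k)), X (t + (u + k))⟫ : ℂ) = ⟪X (s + u), X (t + u)⟫)
    -- the function `B_X`
    (B : G → (G ⧸ K) → ℂ)
    (hB : ∀ t u : G, B t (u : G ⧸ K) = ⟪X u, X (t + u)⟫)
    -- `G/K`-square integrability
    (hInt : Integrable (B 0) μ)
    -- a finite family of characters in `Λ_K`, with factorizations through `G/K`
    (n : ℕ) (lamf : Fin n → G → ℂ) (lamQ : Fin n → G ⧸ K → ℂ)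
    (hlam : ∀ j : Fin n, Continuous (lamf j) ∧
      (∀ t s : G, lamf j (t + s) = lamf j t * lamf j s) ∧
      (∀ t : G, ‖lamf j t‖ = 1) ∧ ∀ k ∈ K, lamf j k = 1)
    (hlamQ : ∀ (j : Fin n) (t : G), lamQ j (t : G ⧸ K) = lamf j t)
    (t : Fin n → G) (c : Fin n → ℂ) :
    0 ≤ (∑ j : Fin n, ∑ k : Fin n,
          c j * conj (c k) *
            (lamf j (t j - t k) *
              ∫ x : G ⧸ K, (lamQ j x * conj (lamQ k x)) * B (t j - t k) x ∂μ)).re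
    ∧ (∑ j : Fin n, ∑ k : Fin n,
          c j * conj (c k) *
            (lamf j (t j - t k) *
              ∫ x : G ⧸ K, (lamQ j x * conj (lamQ k x)) * B (t j - t k) x ∂μ)).im
        = 0 := by
  classical
  -- basic facts about the characters
  have hlam0 : ∀ j : Fin n, lamf j 0 = 1 := by
    intro j
    have h := (hlam j).2.1 0 0
    simp only [add_zero] at h
    have hne : lamf j 0 ≠ 0 := by
      intro h0; have := (hlam j).2.2.1 0; rw [h0] at this; simp at this
    field_simp at h
    exact h.symm
  have hlam_sub : ∀ (j : Fin n) (a b : G), lamf j (a - b) * lamf j b = lamf j a := by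
    intro j a b
    rw [← (hlam j).2.1, sub_add_cancel]
  -- continuity of `lamQ` and of `B s`
  have hmkcont : Topology.IsQuotientMap ((↑) : G → G ⧸ K) := QuotientAddGroup.isQuotientMap_mk K
  have hlamQcont : ∀ j : Fin n, Continuous (lamQ j) := by
    intro j
    rw [hmkcont.continuous_iff]
    have : (lamQ j ∘ ((↑) : G → G ⧸ K)) = lamf j := by
      funext u; exact hlamQ j u
    rw [this]; exact (hlam j).1
  have hBcont : ∀ s : G, Continuous (B s) := by
    intro s
    rw [hmkcont.continuous_iff]
    have : (B s ∘ ((↑) : G → G ⧸ K)) = fun u => (⟪X u, X (s + u)⟫ : ℂ) := by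
      funext u; exact hB s u
    rw [this]
    exact Continuous.inner hXcont (hXcont.comp (continuous_const.add continuous_id))
  -- norm one of lamQ
  have hlamQnorm : ∀ (j : Fin n) (x : G ⧸ K), ‖lamQ j x‖ = 1 := by
    intro j x
    induction x using QuotientAddGroup.induction_on with
    | H u => rw [hlamQ j u]; exact (hlam j).2.2.1 u
  -- B 0 real part
  have hB0 : ∀ u : G, B 0 ((u : G ⧸ K)) = ((‖X u‖ : ℂ)) ^ 2 := by
    intro u
    rw [hB 0 u, zero_add, inner_self_eq_norm_sq_to_K]
    norm_num
  -- bound for B s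
  have hBbound : ∀ (s : G) (x : G ⧸ K),
      ‖B s x‖ ≤ ((B 0 x).re + (B 0 (x + ((s : G ⧸ K)))).re) / 2 := by
    intro s x
    induction x using QuotientAddGroup.induction_on with
    | H u =>
      have h1 : ((u : G ⧸ K) + (s : G ⧸ K)) = ((u + s : G) : G ⧸ K) := rfl
      rw [hB s u, h1, hB0 u, hB0 (u + s)]
      have h2 : ‖(⟪X u, X (s + u)⟫ : ℂ)‖ ≤ ‖X u‖ * ‖X (s + u)‖ := norm_inner_le_norm _ _
      have h3 : ‖X u‖ * ‖X (s + u)‖ ≤ (‖X u‖ ^ 2 + ‖X (s + u)‖ ^ 2) / 2 := by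
        nlinarith [sq_nonneg (‖X u‖ - ‖X (s + u)‖)]
      have h4 : (((‖X u‖ : ℂ)) ^ 2).re = ‖X u‖ ^ 2 := by
        simp [← Complex.ofReal_pow, Complex.ofReal_re]
      have h5 : (((‖X (u + s)‖ : ℂ)) ^ 2).re = ‖X (u + s)‖ ^ 2 := by
        simp [← Complex.ofReal_pow, Complex.ofReal_re]
      rw [h4, h5, add_comm u s]
      linarith
  -- integrability of the shifted B 0 real part
  have hInt0re : Integrable (fun x => (B 0 x).re) μ := hInt.re
  have hdom : ∀ s : G, Integrable
      (fun x => ((B 0 x).re + (B 0 (x + ((s : G ⧸ K)))).re) / 2) μ := by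
    intro s
    exact ((hInt0re.add (hInt0re.comp_add_right ((s : G ⧸ K)))).div_const 2)
  -- integrability of B s
  have hBint : ∀ s : G, Integrable (B s) μ := by
    intro s
    refine Integrable.mono' (hdom s) ((hBcont s).aestronglyMeasurable) ?_
    filter_upwards with x
    exact hBbound s x
  -- integrability of the integrand g_{jk}
  have hgint : ∀ (j k : Fin n) (s : G), Integrable
      (fun x => (lamQ j x * conj (lamQ k x)) * B s x) μ := by
    intro j k s
    refine Integrable.mono' (hdom s)
      ((((hlamQcont j).mul ((Complex.continuous_conj).comp (hlamQcont k))).mul (hBcont s)).aestronglyMeasurable) ?_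
    filter_upwards with x
    calc ‖(lamQ j x * conj (lamQ k x)) * B s x‖
        = ‖lamQ j x‖ * ‖conj (lamQ k x)‖ * ‖B s x‖ := by simp [norm_mul]
      _ = ‖B s x‖ := by rw [hlamQnorm j x, RCLike.norm_conj, hlamQnorm k x]; ring
      _ ≤ _ := hBbound s x
  -- shift each integral by `t k` using Haar invariance
  have hshift : ∀ j k : Fin n,
      (∫ x : G ⧸ K, (lamQ j x * conj (lamQ k x)) * B (t j - t k) x ∂μ)
      = ∫ x : G ⧸ K, (lamQ j (x + ((t k : G) : G ⧸ K)) *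
          conj (lamQ k (x + ((t k : G) : G ⧸ K)))) *
          B (t j - t k) (x + ((t k : G) : G ⧸ K)) ∂μ := by
    intro j k
    exact (integral_add_right_eq_self
      (fun x => (lamQ j x * conj (lamQ k x)) * B (t j - t k) x) (((t k : G) : G ⧸ K))).symm
  -- the combined integrand
  set F : (G ⧸ K) → ℂ := fun x => ∑ j : Fin n, ∑ k : Fin n,
      (c j * conj (c k) * lamf j (t j - t k)) *
        ((lamQ j (x + ((t k : G) : G ⧸ K)) * conj (lamQ k (x + ((t k : G) : G ⧸ K)))) *
          B (t j - t k) (x + ((t k : G) : G ⧸ K))) with hFdef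
  have hFjkint : ∀ j k : Fin n, Integrable (fun x : G ⧸ K =>
      (c j * conj (c k) * lamf j (t j - t k)) *
        ((lamQ j (x + ((t k : G) : G ⧸ K)) * conj (lamQ k (x + ((t k : G) : G ⧸ K)))) *
          B (t j - t k) (x + ((t k : G) : G ⧸ K)))) μ := by
    intro j k
    exact ((hgint j k (t j - t k)).comp_add_right _).const_mul _
  -- the double sum equals the integral of `F`
  have hsum : (∑ j : Fin n, ∑ k : Fin n,
        c j * conj (c k) *
          (lamf j (t j - t k) *
            ∫ x : G ⧸ K, (lamQ j x * conj (lamQ k x)) * B (t j - t k) x ∂μ))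
      = ∫ x, F x ∂μ := by
    rw [hFdef, integral_finset_sum _ (fun j _ => integrable_finset_sum _ (fun k _ => hFjkint j k))]
    refine Finset.sum_congr rfl fun j _ => ?_
    rw [integral_finset_sum _ (fun k _ => hFjkint j k)]
    refine Finset.sum_congr rfl fun k _ => ?_
    rw [hshift j k, integral_const_mul]
    ring
  -- pointwise, `F` is a nonnegative real
  have hFre : ∀ x : G ⧸ K, F x = (((F x).re : ℝ) : ℂ) ∧ 0 ≤ (F x).re := by
    intro x
    induction x using QuotientAddGroup.induction_on with
    | H u =>
      have hkey : F ((u : G) : G ⧸ K)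
          = ((‖∑ m : Fin n, (c m * lamf m (t m + u)) • X (t m + u)‖ ^ 2 : ℝ) : ℂ) := by
        have hterm : ∀ j k : Fin n,
            (c j * conj (c k) * lamf j (t j - t k)) *
              ((lamQ j (((u : G) : G ⧸ K) + ((t k : G) : G ⧸ K)) *
                conj (lamQ k (((u : G) : G ⧸ K) + ((t k : G) : G ⧸ K)))) *
                B (t j - t k) (((u : G) : G ⧸ K) + ((t k : G) : G ⧸ K)))
            = (c j * lamf j (t j + u)) * conj (c k * lamf k (t k + u)) *
                ⟪X (t k + u), X (t j + u)⟫ := by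
          intro j k
          have e1 : (((u : G) : G ⧸ K) + ((t k : G) : G ⧸ K)) = ((t k + u : G) : G ⧸ K) := by
            rw [← QuotientAddGroup.mk_add, add_comm]
          rw [e1, hlamQ, hlamQ, hB]
          have h1 : t j - t k + (t k + u) = t j + u := by abel
          rw [h1]
          have h3 : lamf j (t j - t k) * lamf j (t k + u) = lamf j (t j + u) := by
            have h4 : t j + u - (t k + u) = t j - t k := by abel
            have := hlam_sub j (t j + u) (t k + u)
            rw [h4] at this; exact this
          have hc : conj (c k * lamf k (t k + u)) = conj (c k) * conj (lamf k (t k + u)) :=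
            map_mul _ _ _
          rw [hc]
          linear_combination (c j * conj (c k) * conj (lamf k (t k + u)) *
            (⟪X (t k + u), X (t j + u)⟫ : ℂ)) * h3
        have hw : (⟪∑ m : Fin n, (c m * lamf m (t m + u)) • X (t m + u),
              ∑ m : Fin n, (c m * lamf m (t m + u)) • X (t m + u)⟫ : ℂ)
            = ∑ j : Fin n, ∑ k : Fin n, (c j * lamf j (t j + u)) *
                conj (c k * lamf k (t k + u)) * ⟪X (t k + u), X (t j + u)⟫ := by
          rw [sum_inner, Finset.sum_comm]
          refine Finset.sum_congr rfl fun j _ => ?_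
          rw [inner_sum]
          refine Finset.sum_congr rfl fun k _ => ?_
          rw [inner_smul_left, inner_smul_right]
          ring
        calc F ((u : G) : G ⧸ K)
            = ∑ j : Fin n, ∑ k : Fin n, (c j * lamf j (t j + u)) *
                conj (c k * lamf k (t k + u)) * ⟪X (t k + u), X (t j + u)⟫ := by
              rw [hFdef]
              exact Finset.sum_congr rfl fun j _ => Finset.sum_congr rfl fun k _ => hterm j k
          _ = (⟪∑ m : Fin n, (c m * lamf m (t m + u)) • X (t m + u),
                ∑ m : Fin n, (c m * lamf m (t m + u)) • X (t m + u)⟫ : ℂ) := hw.symm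
          _ = ((‖∑ m : Fin n, (c m * lamf m (t m + u)) • X (t m + u)‖ ^ 2 : ℝ) : ℂ) := by
              rw [inner_self_eq_norm_sq_to_K]; norm_num
      constructor
      · rw [hkey, Complex.ofReal_re]
      · rw [hkey, Complex.ofReal_re]; positivity
  -- conclude
  have hS : (∫ x, F x ∂μ) = (((∫ x, (F x).re ∂μ : ℝ)) : ℂ) := by
    have : (∫ x, F x ∂μ) = ∫ x, (((F x).re : ℝ) : ℂ) ∂μ :=
      integral_congr_ae (Filter.Eventually.of_forall fun x => (hFre x).1)
    rw [this]
    exact integral_ofReal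
  rw [hsum, hS]
  constructor
  · simp only [Complex.ofReal_re]
    exact integral_nonneg fun x => (hFre x).2
  · simp
end

section
/- Let X : G → H be a K-periodically correlated field and let H_X be the closed linear span of {X(t) : t ∈ G}. Then for each k ∈ K there exists a unique unitary operator V^k on H_X such that V^k X(t) = X(t+k) for all t ∈ G, and the map k ↦ V^k is a group homomorphism from K into the unitary group of H_X (V^{k+j} = V^k V^j and V^0 = I). -/
open MeasureTheory ComplexConjugate
open scoped ComplexInnerProductSpace

/-- The closed linear span `H_X` of the values of a field `X : G → H`. -/
def fieldSpan {G : Type*} {H : Type*} [NormedAddCommGroup H]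
    [InnerProductSpace ℂ H] (X : G → H) : Submodule ℂ H :=
  (Submodule.span ℂ (Set.range X)).topologicalClosure

lemma mem_fieldSpan {G : Type*} {H : Type*} [NormedAddCommGroup H]
    [InnerProductSpace ℂ H] (X : G → H) (t : G) : X t ∈ fieldSpan X :=
  Submodule.le_topologicalClosure _ (Submodule.subset_span ⟨t, rfl⟩)

private lemma lc_inner {G H : Type*} [NormedAddCommGroup H] [InnerProductSpace ℂ H]
    (X Y : G → H) (hinn : ∀ s t : G, (⟪Y s, Y t⟫ : ℂ) = ⟪X s, X t⟫)
    (f g : G →₀ ℂ) :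
    (⟪Finsupp.linearCombination ℂ Y f, Finsupp.linearCombination ℂ Y g⟫ : ℂ)
      = ⟪Finsupp.linearCombination ℂ X f, Finsupp.linearCombination ℂ X g⟫ := by
  classical
  simp only [Finsupp.linearCombination_apply, Finsupp.sum, sum_inner]
  refine Finset.sum_congr rfl fun s hs => ?_
  simp only [inner_sum, inner_smul_left, inner_smul_right, hinn]

private lemma lc_norm {G H : Type*} [NormedAddCommGroup H] [InnerProductSpace ℂ H]
    (X Y : G → H) (hinn : ∀ s t : G, (⟪Y s, Y t⟫ : ℂ) = ⟪X s, X t⟫)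
    (f : G →₀ ℂ) :
    ‖Finsupp.linearCombination ℂ Y f‖ = ‖Finsupp.linearCombination ℂ X f‖ := by
  rw [@norm_eq_sqrt_re_inner ℂ, @norm_eq_sqrt_re_inner ℂ, lc_inner X Y hinn]

private lemma exists_shift {G H : Type*} [AddCommGroup G] [NormedAddCommGroup H]
    [InnerProductSpace ℂ H] [CompleteSpace H] (X : G → H) (k : G)
    (hinn : ∀ s t : G, (⟪X (s + k), X (t + k)⟫ : ℂ) = ⟪X s, X t⟫) :
    ∃ L : ↥(fieldSpan X) →ₗᵢ[ℂ] ↥(fieldSpan X),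
      ∀ t : G, ((L ⟨X t, mem_fieldSpan X t⟩ : ↥(fieldSpan X)) : H) = X (t + k) := by
  classical
  haveI : CompleteSpace (fieldSpan X) :=
    (Submodule.isClosed_topologicalClosure _).completeSpace_coe
  set Y : G → H := fun t => X (t + k) with hY
  have hinn' : ∀ s t : G, (⟪Y s, Y t⟫ : ℂ) = ⟪X s, X t⟫ := hinn
  have hnorm := lc_norm X Y hinn'
  set lX := Finsupp.linearCombination ℂ X with hlX
  set lY := Finsupp.linearCombination ℂ Y with hlY
  have hker : LinearMap.ker lX ≤ LinearMap.ker lY := by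
    intro f hf
    rw [LinearMap.mem_ker] at hf ⊢
    rw [← norm_eq_zero, hnorm, hf, norm_zero]
  -- the map on the (algebraic) span
  set e1 : ↥(Submodule.span ℂ (Set.range X)) ≃ₗ[ℂ] ↥(LinearMap.range lX) :=
    LinearEquiv.ofEq _ _ (Finsupp.range_linearCombination ℂ (v := X)).symm with he1
  set T0 : ↥(Submodule.span ℂ (Set.range X)) →ₗ[ℂ] H :=
    ((LinearMap.ker lX).liftQ lY hker).comp
      (((LinearMap.quotKerEquivRange lX).symm.toLinearMap).comp e1.toLinearMap) with hT0def
  have hT0 : ∀ f : G →₀ ℂ, ∀ h, T0 ⟨lX f, h⟩ = lY f := by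
    intro f h
    have h1 : e1 ⟨lX f, h⟩ = ⟨lX f, LinearMap.mem_range_self _ f⟩ := rfl
    have h2 : (LinearMap.quotKerEquivRange lX).symm ⟨lX f, LinearMap.mem_range_self _ f⟩
        = Submodule.Quotient.mk f := by
      apply (LinearMap.quotKerEquivRange lX).injective
      rw [LinearEquiv.apply_symm_apply]
      exact Subtype.ext (LinearMap.quotKerEquivRange_apply_mk lX f)
    simp only [hT0def, LinearMap.comp_apply, LinearEquiv.coe_coe, h1, h2,
      Submodule.liftQ_apply]
  have hmemX : ∀ x : ↥(Submodule.span ℂ (Set.range X)), ∃ f : G →₀ ℂ, lX f = (x : H) := by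
    intro x
    have hx : (x : H) ∈ LinearMap.range lX := by
      rw [hlX, Finsupp.range_linearCombination]; exact x.2
    exact hx
  have hYle : Submodule.span ℂ (Set.range Y) ≤ Submodule.span ℂ (Set.range X) :=
    Submodule.span_mono (by rintro _ ⟨t, rfl⟩; exact ⟨t + k, rfl⟩)
  have hT0mem : ∀ x, T0 x ∈ fieldSpan X := by
    intro x
    obtain ⟨f, hf⟩ := hmemX x
    have hx : x = ⟨lX f, hf ▸ x.2⟩ := Subtype.ext hf.symm
    rw [hx, hT0]
    refine Submodule.le_topologicalClosure _ (hYle ?_)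
    have h6 : lY f ∈ LinearMap.range lY := LinearMap.mem_range_self _ f
    rwa [hlY, Finsupp.range_linearCombination] at h6
  set T1 : ↥(Submodule.span ℂ (Set.range X)) →ₗ[ℂ] ↥(fieldSpan X) :=
    T0.codRestrict (fieldSpan X) hT0mem with hT1def
  have hT1norm : ∀ x, ‖T1 x‖ = ‖x‖ := by
    intro x
    obtain ⟨f, hf⟩ := hmemX x
    have hx : x = ⟨lX f, hf ▸ x.2⟩ := Subtype.ext hf.symm
    have : ‖T1 x‖ = ‖T0 x‖ := rfl
    rw [this, hx, hT0, Submodule.coe_norm, hnorm]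
  set J : ↥(Submodule.span ℂ (Set.range X)) →ₗᵢ[ℂ] ↥(fieldSpan X) := ⟨T1, hT1norm⟩ with hJdef
  -- the inclusion
  set einc : ↥(Submodule.span ℂ (Set.range X)) →ₗᵢ[ℂ] ↥(fieldSpan X) :=
    ⟨Submodule.inclusion (Submodule.le_topologicalClosure _), fun x => rfl⟩ with heinc
  have hdense : DenseRange einc.toContinuousLinearMap := by
    intro y
    rw [closure_subtype]
    have himg : (Subtype.val '' Set.range einc.toContinuousLinearMap)
        = (Submodule.span ℂ (Set.range X) : Set H) := by
      ext x
      constructor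
      · rintro ⟨_, ⟨z, rfl⟩, rfl⟩; exact z.2
      · intro hx; exact ⟨einc.toContinuousLinearMap ⟨x, hx⟩, ⟨⟨x, hx⟩, rfl⟩, rfl⟩
    rw [himg, ← Submodule.topologicalClosure_coe]
    exact y.2
  have h_e : IsUniformInducing einc.toContinuousLinearMap := einc.isometry.isUniformInducing
  set ext : ↥(fieldSpan X) →L[ℂ] ↥(fieldSpan X) :=
    J.toContinuousLinearMap.extend einc.toContinuousLinearMap with hextdef
  have hext_eq : ∀ x, ext (einc x) = J x := fun x =>
    ContinuousLinearMap.extend_eq (f := J.toContinuousLinearMap) (e := einc.toContinuousLinearMap) hdense h_e x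
  have hextnorm : ∀ y, ‖ext y‖ = ‖y‖ := by
    intro y
    refine hdense.induction_on y (isClosed_eq ext.continuous.norm continuous_norm) ?_
    intro x
    show ‖ext (einc x)‖ = ‖einc x‖
    rw [hext_eq, J.norm_map, einc.norm_map]
  refine ⟨⟨ext.toLinearMap, hextnorm⟩, ?_⟩
  intro t
  have h1 : (⟨X t, mem_fieldSpan X t⟩ : ↥(fieldSpan X))
      = einc ⟨X t, Submodule.subset_span ⟨t, rfl⟩⟩ := rfl
  show ((ext ⟨X t, mem_fieldSpan X t⟩ : ↥(fieldSpan X)) : H) = X (t + k)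
  rw [h1, hext_eq]
  have hmem' : lX (Finsupp.single t 1) ∈ Submodule.span ℂ (Set.range X) := by
    show Finsupp.linearCombination ℂ X (Finsupp.single t 1) ∈ _
    rw [Finsupp.linearCombination_single, one_smul]
    exact Submodule.subset_span ⟨t, rfl⟩
  have h2 : (⟨X t, Submodule.subset_span ⟨t, rfl⟩⟩ : ↥(Submodule.span ℂ (Set.range X)))
      = ⟨lX (Finsupp.single t 1), hmem'⟩ := by
    refine Subtype.ext ?_
    show X t = Finsupp.linearCombination ℂ X (Finsupp.single t 1)
    rw [Finsupp.linearCombination_single, one_smul]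
  rw [h2]
  have h5 : lY (Finsupp.single t 1) = X (t + k) := by
    show Finsupp.linearCombination ℂ Y (Finsupp.single t 1) = X (t + k)
    rw [Finsupp.linearCombination_single, one_smul]
  exact (hT0 _ hmem').trans h5

private lemma dense_genset {G H : Type*} [NormedAddCommGroup H]
    [InnerProductSpace ℂ H] (X : G → H) :
    Dense ((Submodule.span ℂ
      (Set.range fun t => (⟨X t, mem_fieldSpan X t⟩ : ↥(fieldSpan X)))) :
        Set ↥(fieldSpan X)) := by
  set S : Set ↥(fieldSpan X) :=
    Set.range fun t => (⟨X t, mem_fieldSpan X t⟩ : ↥(fieldSpan X)) with hS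
  intro y
  rw [closure_subtype]
  have himg : (Subtype.val '' (Submodule.span ℂ S : Set ↥(fieldSpan X)))
      = (Submodule.span ℂ (Set.range X) : Set H) := by
    have h1 : Submodule.map (fieldSpan X).subtype (Submodule.span ℂ S)
        = Submodule.span ℂ (Set.range X) := by
      rw [Submodule.map_span]
      congr 1
      ext x
      constructor
      · rintro ⟨_, ⟨t, rfl⟩, rfl⟩; exact ⟨t, rfl⟩
      · rintro ⟨t, rfl⟩; exact ⟨⟨X t, mem_fieldSpan X t⟩, ⟨t, rfl⟩, rfl⟩
    rw [← h1]
    rfl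
  rw [himg, ← Submodule.topologicalClosure_coe]
  exact y.2


/-- Let `X : G → H` be a `K`-periodically correlated field.  Then
for each `k ∈ K` there is a unique unitary operator `Vᵏ` on `H_X` (encoded as a linear
isometric equivalence of `H_X`) with `Vᵏ X(t) = X(t+k)` for all `t ∈ G`, and
`k ↦ Vᵏ` is a group homomorphism from `K` into the unitary group of `H_X`
(`V^{k+j} = Vᵏ ∘ Vʲ` and `V⁰ = I`). -/
theorem spectrum_pc_fields_stmt13
    {G : Type*} [AddCommGroup G] [TopologicalSpace G] [IsTopologicalAddGroup G]
    [LocallyCompactSpace G]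
    {H : Type*} [NormedAddCommGroup H] [InnerProductSpace ℂ H] [CompleteSpace H]
    [TopologicalSpace.SeparableSpace H]
    (K : AddSubgroup G) (hK : IsClosed (K : Set G))
    (X : G → H)
    -- `X` is `K`-periodically correlated
    (hXcont : Continuous X)
    (hXpc : ∀ t s u : G, ∀ k ∈ K,
      (⟪X (s + (u + k)), X (t + (u + k))⟫ : ℂ) = ⟪X (s + u), X (t + u)⟫) :
    ∃ V : K → (↥(fieldSpan X) ≃ₗᵢ[ℂ] ↥(fieldSpan X)),
      -- the defining property `Vᵏ X(t) = X(t+k)`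
      (∀ (k : K) (t : G),
        ((V k ⟨X t, mem_fieldSpan X t⟩ : ↥(fieldSpan X)) : H) = X (t + k))
      -- uniqueness of `Vᵏ`
      ∧ (∀ (k : K) (W : ↥(fieldSpan X) ≃ₗᵢ[ℂ] ↥(fieldSpan X)),
          (∀ t : G, ((W ⟨X t, mem_fieldSpan X t⟩ : ↥(fieldSpan X)) : H) = X (t + k)) →
          W = V k)
      -- `k ↦ Vᵏ` is a group homomorphism
      ∧ (V 0 = LinearIsometryEquiv.refl ℂ ↥(fieldSpan X))
      ∧ (∀ k j : K, V (k + j) = (V j).trans (V k)) := by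
  classical
  -- the shift isometries
  have hLk : ∀ k : K, ∃ L : ↥(fieldSpan X) →ₗᵢ[ℂ] ↥(fieldSpan X),
      ∀ t : G, ((L ⟨X t, mem_fieldSpan X t⟩ : ↥(fieldSpan X)) : H) = X (t + (k : G)) := by
    intro k
    refine exists_shift X (k : G) (fun s t => ?_)
    simpa using hXpc t s 0 (k : G) k.2
  choose L hL using hLk
  -- extensionality via density
  have key : ∀ (A B : ↥(fieldSpan X) →ₗᵢ[ℂ] ↥(fieldSpan X)),
      (∀ t : G, A ⟨X t, mem_fieldSpan X t⟩ = B ⟨X t, mem_fieldSpan X t⟩) →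
      ∀ x, A x = B x := by
    intro A B h x
    have heq : A.toContinuousLinearMap = B.toContinuousLinearMap := by
      refine ContinuousLinearMap.ext_on (dense_genset X) ?_
      rintro _ ⟨t, rfl⟩
      exact h t
    exact DFunLike.congr_fun (congrArg (fun (f : _ →L[ℂ] _) => f) heq) x
  -- composition law
  have hcomp : ∀ (k j : K) (x : ↥(fieldSpan X)), L k (L j x) = L (k + j) x := by
    intro k j x
    refine key ((L k).comp (L j)) (L (k + j)) (fun t => ?_) x
    have h1 : (L j ⟨X t, mem_fieldSpan X t⟩ : ↥(fieldSpan X))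
        = ⟨X (t + (j : G)), mem_fieldSpan X _⟩ := Subtype.ext (hL j t)
    show L k (L j ⟨X t, mem_fieldSpan X t⟩) = L (k + j) ⟨X t, mem_fieldSpan X t⟩
    rw [h1]
    refine Subtype.ext ?_
    rw [hL k (t + (j : G)), hL (k + j) t]
    push_cast
    congr 1
    abel
  -- identity law
  have hzero : ∀ x, L 0 x = x := by
    intro x
    refine key (L 0) (LinearIsometry.id) (fun t => ?_) x
    refine Subtype.ext ?_
    rw [hL 0 t]
    simp
  -- the unitary operators
  have hinv : ∀ (k : K) (x : ↥(fieldSpan X)), L k (L (-k) x) = x := by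
    intro k x
    rw [hcomp k (-k) x, add_neg_cancel]
    exact hzero x
  have hinv' : ∀ (k : K) (x : ↥(fieldSpan X)), L (-k) (L k x) = x := by
    intro k x
    rw [hcomp (-k) k x, neg_add_cancel]
    exact hzero x
  set V : K → (↥(fieldSpan X) ≃ₗᵢ[ℂ] ↥(fieldSpan X)) := fun k =>
    { toLinearEquiv := LinearEquiv.ofLinear (L k).toLinearMap (L (-k)).toLinearMap
        (LinearMap.ext fun x => hinv k x) (LinearMap.ext fun x => hinv' k x)
      norm_map' := (L k).norm_map } with hV
  have hVapp : ∀ (k : K) (x : ↥(fieldSpan X)), V k x = L k x := fun k x => rfl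
  refine ⟨V, fun k t => ?_, fun k W hW => ?_, ?_, fun k j => ?_⟩
  · rw [hVapp]; exact hL k t
  · refine LinearIsometryEquiv.ext fun x => ?_
    have := key W.toLinearIsometry (L k) (fun t => Subtype.ext (by
      rw [hL k t]
      exact hW t)) x
    rw [hVapp]
    exact this
  · refine LinearIsometryEquiv.ext fun x => ?_
    rw [hVapp]
    exact hzero x
  · refine LinearIsometryEquiv.ext fun x => ?_
    rw [hVapp, LinearIsometryEquiv.trans_apply, hVapp, hVapp]
    exact (hcomp k j x).symm
end

section
/- Let T, S be non-zero integers with gcd(T, S) = 1, and let p, q be integers with T·q − S·p = 1. Let X : ℤ² → H be a weakly periodically correlated field with period (T, S), i.e. ⟪X(m+T, n+S), X(u+T, v+S)⟫ = ⟪X(m, n), X(u, v)⟫ for all m, n, u, v ∈ ℤ. Define Y : ℤ² → H by Y(m, n) = X(T·m + p·n, S·m + q·n). Then Y is stationary in its first variable: ⟪Y(m+1, n), Y(u+1, v)⟫ = ⟪Y(m, n), Y(u, v)⟫ for all m, n, u, v ∈ ℤ; moreover X(m,n) = Y applied to (m,n)·(Φ')⁻¹ where Φ = [[T, p],[S, q]],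 so X is a rotation of a field stationary in one coordinate. -/
open scoped ComplexInnerProductSpace

/-- Let `T, S` be non-zero coprime integers and `p, q` integers with
`T·q - S·p = 1`.  Let `X : ℤ² → H` be a weakly periodically correlated field with
period `(T,S)`, i.e. the covariance is invariant under the simultaneous shift of both
arguments by `(T,S)`.  Define `Y(m,n) = X(T·m + p·n, S·m + q·n)`.  Then `Y` is
stationary in its first variable, and `X(m,n) = Y((m,n)·(Φ')⁻¹)` where
`Φ = [[T,p],[S,q]] ∈ SL(2,ℤ)`, i.e. `X(m,n) = Y(q·m - p·n, -S·m + T·n)`; so `X` is a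
rotation of a field stationary in one coordinate. -/
theorem spectrum_pc_fields_stmt17
    {H : Type*} [NormedAddCommGroup H] [InnerProductSpace ℂ H] [CompleteSpace H]
    [TopologicalSpace.SeparableSpace H]
    (T S p q : ℤ) (hT : T ≠ 0) (hS : S ≠ 0) (hcop : Int.gcd T S = 1)
    (hBezout : T * q - S * p = 1)
    (X Y : ℤ × ℤ → H)
    -- `X` is weakly PC with period `(T,S)`
    (hXpc : ∀ m n u v : ℤ,
      (⟪X (u + T, v + S), X (m + T, n + S)⟫ : ℂ) = ⟪X (u, v), X (m, n)⟫)
    -- definition of the rotated field `Y`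
    (hY : ∀ m n : ℤ, Y (m, n) = X (T * m + p * n, S * m + q * n)) :
    -- `Y` is stationary in its first variable
    (∀ m n u v : ℤ,
      (⟪Y (u + 1, v), Y (m + 1, n)⟫ : ℂ) = ⟪Y (u, v), Y (m, n)⟫)
    -- and `X` is recovered from `Y` by the inverse rotation `(Φ')⁻¹`
    ∧ ∀ m n : ℤ, X (m, n) = Y (q * m - p * n, -S * m + T * n) := by
  constructor
  · intro m n u v
    rw [hY, hY, hY, hY]
    have h1 : T * (u + 1) + p * v = (T * u + p * v) + T := by ring
    have h2 : S * (u + 1) + q * v = (S * u + q * v) + S := by ring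
    have h3 : T * (m + 1) + p * n = (T * m + p * n) + T := by ring
    have h4 : S * (m + 1) + q * n = (S * m + q * n) + S := by ring
    rw [h1, h2, h3, h4, hXpc]
  · intro m n
    rw [hY]
    congr 1
    have e1 : T * (q * m - p * n) + p * (-S * m + T * n) = m := by linear_combination m * hBezout
    have e2 : S * (q * m - p * n) + q * (-S * m + T * n) = n := by linear_combination n * hBezout
    rw [e1, e2]
end
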